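/- arXiv:1601.02205 — 2 statements merged into one kernel-verified Lean document; each statement's English description precedes it below -/
import Mathlib

section
/- Suppose the left shift σ is measure-preserving and ergodic with respect to P, and that ∫ log A_1 dP < ∞. Then for P-almost every ω, lim_{n→∞} (1/n)·log Q_n(ω) = −∫ log X dP. -/
open Filter MeasureTheory Real Topology

instance : MeasurableSpace ℕ+ := ⊤

/-- `cfP a n` is the continued fraction numerator `P_{n-1}` of the sequence
`a 1, a 2, …` (so `cfP a 0 = P_{-1} = 1`, `cfP a 1 = P_0 = 0`, and
`P_n = a_n P_{n-1} + P_{n-2}` for `n ≥ 1`). -/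
def cfP (a : ℕ → ℕ) : ℕ → ℤ
  | 0 => 1
  | 1 => 0
  | n + 2 => (a (n + 1) : ℤ) * cfP a (n + 1) + cfP a n

/-- `cfQ a n` is the continued fraction denominator `Q_{n-1}` of the sequence
`a 1, a 2, …` (so `cfQ a 0 = Q_{-1} = 0`, `cfQ a 1 = Q_0 = 1`, and
`Q_n = a_n Q_{n-1} + Q_{n-2}` for `n ≥ 1`). -/
def cfQ (a : ℕ → ℕ) : ℕ → ℤ
  | 0 => 0
  | 1 => 1
  | n + 2 => (a (n + 1) : ℤ) * cfQ a (n + 1) + cfQ a n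

/-- The `n`-th convergent `P_n / Q_n = [a_1, …, a_n]`. -/
noncomputable def cfConv (a : ℕ → ℕ) (n : ℕ) : ℝ :=
  (cfP a (n + 1) : ℝ) / (cfQ a (n + 1) : ℝ)

/-- The value `[a_1, a_2, …]` of the infinite continued fraction, as the limit
of the convergents. -/
noncomputable def cfVal (a : ℕ → ℕ) : ℝ := limUnder atTop (cfConv a)

/-- The left shift on `{1,2,3,…}^ℕ` (coordinate `n-1` of `ω` is `A_n(ω)`). -/
def shiftS : (ℕ → ℕ+) → (ℕ → ℕ+) := fun ω n => ω (n + 1)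

/-- `Xtail ω k = X_k(ω) = [A_k(ω), A_{k+1}(ω), …]` for `k ≥ 1`, where
`A_n(ω) = ω (n-1)`. -/
noncomputable def Xtail (ω : ℕ → ℕ+) (k : ℕ) : ℝ :=
  cfVal (fun i => (ω (i + k - 2) : ℕ))

/-- `Qent ω n = Q_n(ω)`, the denominator of the convergent `[A_1(ω), …, A_n(ω)]`. -/
def Qent (ω : ℕ → ℕ+) (n : ℕ) : ℤ := cfQ (fun i => (ω (i - 1) : ℕ)) (n + 1)

/-!
Write `X_k = [A_k, A_{k+1}, …]`. Since `X_k = 1 / (A_k + X_{k+1})`, the product telescopes: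
`X_1 ⋯ X_n = 1 / (Q_n + Q_{n-1} X_{n+1})`, and as `0 ≤ Q_{n-1} ≤ Q_n` and `0 < X_{n+1} ≤ 1` this
lies between `1 / (2 Q_n)` and `1 / Q_n`. Hence `log Q_n = -∑_{k<n} log X ∘ σ^k + O(1)`, and
Birkhoff's pointwise ergodic theorem for `log X` (integrable, as `1 / (A_1 + 1) ≤ X ≤ 1`) gives
the limit. The ergodic theorem itself is derived from Garsia's maximal inequality: for `∫ g < 0`
the set where the Birkhoff sums of `g` stay bounded above is invariant, and it cannot be null,
since otherwise almost every point has a positive Birkhoff sum and the maximal inequality would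
force `∫ g ≥ 0`.
-/

section ContinuedFraction

variable {a : ℕ → ℕ}

lemma cfP_add_two (n : ℕ) : cfP a (n + 2) = a (n + 1) * cfP a (n + 1) + cfP a n := rfl

lemma cfQ_add_two (n : ℕ) : cfQ a (n + 2) = a (n + 1) * cfQ a (n + 1) + cfQ a n := rfl

lemma cfP_nonneg (n : ℕ) : 0 ≤ cfP a n := by
  induction n using Nat.twoStepInduction with
  | zero => exact zero_le_one
  | one => exact le_rfl
  | more n h₀ h₁ => rw [cfP_add_two]; positivity

lemma cfQ_nonneg (n : ℕ) : 0 ≤ cfQ a n := by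
  induction n using Nat.twoStepInduction with
  | zero => exact le_rfl
  | one => exact zero_le_one
  | more n h₀ h₁ => rw [cfQ_add_two]; positivity

lemma cfQ_pos (ha : ∀ i, 0 < a (i + 1)) (n : ℕ) : 0 < cfQ a (n + 1) := by
  induction n using Nat.twoStepInduction with
  | zero => exact zero_lt_one
  | one => have := ha 0; rw [cfQ_add_two]; simpa [cfQ] using this
  | more n h₀ h₁ => have := ha (n + 1); rw [cfQ_add_two]; positivity

lemma cfQ_le_cfQ_succ (ha : ∀ i, 0 < a (i + 1)) (n : ℕ) : cfQ a n ≤ cfQ a (n + 1) := by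
  cases n with
  | zero => exact zero_le_one
  | succ n =>
    rw [cfQ_add_two]
    exact le_add_of_le_of_nonneg
      (le_mul_of_one_le_left (cfQ_nonneg _) (by exact_mod_cast ha n)) (cfQ_nonneg n)

lemma cfP_mul_cfQ_sub_cfP_mul_cfQ (n : ℕ) :
    cfP a (n + 2) * cfQ a (n + 1) - cfP a (n + 1) * cfQ a (n + 2) = (-1) ^ n := by
  induction n with
  | zero => simp [cfP, cfQ]
  | succ n ih =>
    rw [cfP_add_two (n + 1), cfQ_add_two (n + 1), pow_succ, ← ih]
    ring

lemma two_pow_le_cfQ_mul_cfQ (ha : ∀ i, 0 < a (i + 1)) (n : ℕ) :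
    2 ^ n ≤ cfQ a (n + 1) * cfQ a (n + 2) := by
  induction n with
  | zero => rw [pow_zero, show cfQ a 1 = 1 from rfl, one_mul]; exact cfQ_pos ha 1
  | succ n ih =>
    have ih' : 2 ^ n ≤ cfQ a (n + 1) * cfQ a (n + 1 + 1) := ih
    have hmono := cfQ_le_cfQ_succ ha (n + 1)
    have hQ := (cfQ_pos ha (n + 1)).le
    have ha' : (1 : ℤ) ≤ a (n + 1 + 1) := by exact_mod_cast ha (n + 1)
    rw [cfQ_add_two (n + 1), pow_succ]
    nlinarith [mul_le_mul_of_nonneg_left hmono hQ,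
      mul_le_mul_of_nonneg_right ha' (mul_nonneg hQ hQ)]

lemma cfConv_nonneg (n : ℕ) : 0 ≤ cfConv a n :=
  div_nonneg (by exact_mod_cast cfP_nonneg _) (by exact_mod_cast cfQ_nonneg _)

lemma dist_cfConv_le (ha : ∀ i, 0 < a (i + 1)) (n : ℕ) :
    dist (cfConv a n) (cfConv a (n + 1)) ≤ (1 / 2) ^ n := by
  have hQ₁ : (0 : ℝ) < cfQ a (n + 1) := by exact_mod_cast cfQ_pos ha n
  have hQ₂ : (0 : ℝ) < cfQ a (n + 2) := by exact_mod_cast cfQ_pos ha (n + 1)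
  have hdet : (cfP a (n + 2) * cfQ a (n + 1) - cfP a (n + 1) * cfQ a (n + 2) : ℝ) = (-1) ^ n := by
    exact_mod_cast cfP_mul_cfQ_sub_cfP_mul_cfQ n
  have hgrowth : (2 : ℝ) ^ n ≤ cfQ a (n + 1) * cfQ a (n + 2) := by
    exact_mod_cast two_pow_le_cfQ_mul_cfQ ha n
  have hnum : |(cfP a (n + 1) * cfQ a (n + 2) - cfQ a (n + 1) * cfP a (n + 2) : ℝ)| = 1 := by
    rw [show (cfP a (n + 1) * cfQ a (n + 2) - cfQ a (n + 1) * cfP a (n + 2) : ℝ) = -(-1) ^ n by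
      linarith]
    simp
  rw [Real.dist_eq, cfConv, cfConv, div_sub_div _ _ hQ₁.ne' hQ₂.ne', abs_div,
    abs_of_pos (mul_pos hQ₁ hQ₂), hnum, one_div_pow]
  exact one_div_le_one_div_of_le (by positivity) hgrowth

lemma tendsto_cfConv (ha : ∀ i, 0 < a (i + 1)) : Tendsto (cfConv a) atTop (𝓝 (cfVal a)) :=
  (cauchySeq_of_le_geometric _ 1 (by norm_num) fun n =>
    (dist_cfConv_le ha n).trans_eq (one_mul _).symm).tendsto_limUnder

lemma cfVal_nonneg (ha : ∀ i, 0 < a (i + 1)) : 0 ≤ cfVal a :=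
  ge_of_tendsto' (tendsto_cfConv ha) cfConv_nonneg

lemma cfP_cfQ_succ_eq_tail (n : ℕ) :
    cfP a (n + 1) = cfQ (fun i => a (i + 1)) n ∧
      cfQ a (n + 1) = a 1 * cfQ (fun i => a (i + 1)) n + cfP (fun i => a (i + 1)) n := by
  induction n using Nat.twoStepInduction with
  | zero => simp [cfP, cfQ]
  | one => simp [cfP, cfQ]
  | more n h₀ h₁ =>
    refine ⟨by rw [cfP_add_two, h₁.1, h₀.1]; rfl, ?_⟩
    rw [cfQ_add_two, h₁.2, h₀.2, cfQ_add_two, cfP_add_two]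
    ring

lemma cfConv_succ (ha : ∀ i, 0 < a (i + 1)) (n : ℕ) :
    cfConv a (n + 1) = 1 / (a 1 + cfConv (fun i => a (i + 1)) n) := by
  have hQ : (0 : ℝ) < cfQ (fun i => a (i + 1)) (n + 1) := by
    exact_mod_cast cfQ_pos (fun i => ha (i + 1)) n
  obtain ⟨hP, hQ'⟩ := cfP_cfQ_succ_eq_tail (a := a) (n + 1)
  rw [cfConv, cfConv, hP, hQ']
  push_cast
  field_simp

lemma cfVal_eq_one_div (ha : ∀ i, 0 < a (i + 1)) :
    cfVal a = 1 / (a 1 + cfVal (fun i => a (i + 1))) := by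
  have ha' : ∀ i, 0 < a (i + 1 + 1) := fun i => ha (i + 1)
  have hden : (a 1 : ℝ) + cfVal (fun i => a (i + 1)) ≠ 0 := by
    have : (0 : ℝ) < a 1 := by exact_mod_cast ha 0
    linarith [cfVal_nonneg (a := fun i => a (i + 1)) ha']
  refine tendsto_nhds_unique ((tendsto_add_atTop_iff_nat 1).2 (tendsto_cfConv ha)) ?_
  simp_rw [cfConv_succ ha]
  exact tendsto_const_nhds.div (tendsto_const_nhds.add (tendsto_cfConv ha')) hden

lemma cfVal_pos (ha : ∀ i, 0 < a (i + 1)) : 0 < cfVal a := by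
  have := cfVal_nonneg (a := fun i => a (i + 1)) fun i => ha (i + 1)
  have ha₁ : 0 < a 1 := ha 0
  rw [cfVal_eq_one_div ha]
  positivity

lemma cfVal_le_one (ha : ∀ i, 0 < a (i + 1)) : cfVal a ≤ 1 := by
  have hX := cfVal_nonneg (a := fun i => a (i + 1)) fun i => ha (i + 1)
  have ha₁ : (1 : ℝ) ≤ a 1 := by exact_mod_cast ha 0
  rw [cfVal_eq_one_div ha, div_le_one (by linarith)]
  linarith

lemma one_div_add_one_le_cfVal (ha : ∀ i, 0 < a (i + 1)) : 1 / (a 1 + 1 : ℝ) ≤ cfVal a := by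
  have hX := cfVal_nonneg (a := fun i => a (i + 1)) fun i => ha (i + 1)
  have hX₁ := cfVal_le_one (a := fun i => a (i + 1)) fun i => ha (i + 1)
  have ha₁ : 0 < a 1 := ha 0
  rw [cfVal_eq_one_div ha]
  gcongr

lemma abs_log_cfVal_le (ha : ∀ i, 0 < a (i + 1)) : |log (cfVal a)| ≤ log 2 + log (a 1) := by
  have hX := cfVal_pos ha
  have ha₁ : (1 : ℝ) ≤ a 1 := by exact_mod_cast ha 0
  rw [abs_of_nonpos (log_nonpos hX.le (cfVal_le_one ha)), ← log_mul two_ne_zero (by positivity)]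
  calc -log (cfVal a) ≤ -log (1 / (a 1 + 1 : ℝ)) :=
        neg_le_neg (log_le_log (by positivity) (one_div_add_one_le_cfVal ha))
    _ = log (a 1 + 1) := by rw [one_div, log_inv, neg_neg]
    _ ≤ log (2 * a 1) := log_le_log (by positivity) (by linarith)

lemma cfVal_tail_eq_one_div (ha : ∀ i, 0 < a (i + 1)) (k : ℕ) :
    cfVal (fun i => a (i + k)) = 1 / (a (k + 1) + cfVal fun i => a (i + (k + 1))) := by
  rw [cfVal_eq_one_div fun i => Nat.add_right_comm i k 1 ▸ ha (i + k), Nat.add_comm 1 k]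
  simp only [Nat.add_assoc, Nat.add_comm 1 k]

lemma prod_cfVal_tail (ha : ∀ i, 0 < a (i + 1)) (n : ℕ) :
    ∏ k ∈ Finset.range n, cfVal (fun i => a (i + k)) =
      1 / (cfQ a (n + 1) + cfQ a n * cfVal fun i => a (i + n)) := by
  induction n with
  | zero => simp [cfQ]
  | succ n ih =>
    have hY := cfVal_nonneg (a := fun i => a (i + (n + 1))) fun i => ha (i + 1 + n)
    have ha₁ : 0 < a (n + 1) := ha n
    have hQ := cfQ_pos ha n
    have hQ' := cfQ_nonneg (a := a) n
    rw [Finset.prod_range_succ, ih, cfVal_tail_eq_one_div ha n,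
      show cfQ a (n + 1 + 1) = _ from cfQ_add_two n]
    push_cast
    field_simp
    ring

lemma abs_log_cfQ_add_sum_log_cfVal_le (ha : ∀ i, 0 < a (i + 1)) (n : ℕ) :
    |log (cfQ a (n + 1)) + ∑ k ∈ Finset.range n, log (cfVal fun i => a (i + k))| ≤ log 2 := by
  have htail : ∀ k i, 0 < a (i + 1 + k) := fun k i => Nat.add_right_comm i k 1 ▸ ha (i + k)
  set X := cfVal fun i => a (i + n)
  have hX := cfVal_pos (a := fun i => a (i + n)) (htail n)
  have hX₁ := cfVal_le_one (a := fun i => a (i + n)) (htail n)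
  have hQ : (0 : ℝ) < cfQ a (n + 1) := by exact_mod_cast cfQ_pos ha n
  have hQ' : (0 : ℝ) ≤ cfQ a n := by exact_mod_cast cfQ_nonneg n
  have hmono : (cfQ a n : ℝ) ≤ cfQ a (n + 1) := by exact_mod_cast cfQ_le_cfQ_succ ha n
  have hD₁ : (cfQ a (n + 1) : ℝ) ≤ cfQ a (n + 1) + cfQ a n * X := by nlinarith
  have hD₂ : (cfQ a (n + 1) : ℝ) + cfQ a n * X ≤ 2 * cfQ a (n + 1) := by nlinarith
  rw [← log_prod fun k _ => (cfVal_pos (a := fun i => a (i + k)) (htail k)).ne',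
    prod_cfVal_tail ha n, one_div, log_inv,
    ← sub_eq_add_neg, abs_sub_comm, abs_of_nonneg (sub_nonneg.2 (log_le_log hQ hD₁)),
    sub_le_iff_le_add, ← log_mul two_ne_zero hQ.ne']
  exact log_le_log (by linarith) hD₂

lemma cfP_cfQ_congr {b : ℕ → ℕ} (hab : ∀ i, 0 < i → a i = b i) (n : ℕ) :
    cfP a n = cfP b n ∧ cfQ a n = cfQ b n := by
  induction n using Nat.twoStepInduction with
  | zero => exact ⟨rfl, rfl⟩
  | one => exact ⟨rfl, rfl⟩
  | more n h₀ h₁ =>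
    rw [cfP_add_two, cfP_add_two, cfQ_add_two, cfQ_add_two, hab (n + 1) n.succ_pos, h₀.1, h₀.2,
      h₁.1, h₁.2]
    exact ⟨rfl, rfl⟩

lemma cfVal_congr {b : ℕ → ℕ} (hab : ∀ i, 0 < i → a i = b i) : cfVal a = cfVal b := by
  unfold cfVal cfConv
  simp_rw [(cfP_cfQ_congr hab _).1, (cfP_cfQ_congr hab _).2]

end ContinuedFraction

section Measurability

variable {Ω : Type*} [MeasurableSpace Ω] {a : Ω → ℕ → ℕ}

lemma measurable_cfP_cfQ (ha : ∀ i, Measurable fun ω => a ω i) (n : ℕ) :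
    Measurable (fun ω => cfP (a ω) n) ∧ Measurable (fun ω => cfQ (a ω) n) := by
  induction n using Nat.twoStepInduction with
  | zero => exact ⟨measurable_const, measurable_const⟩
  | one => exact ⟨measurable_const, measurable_const⟩
  | more n h₀ h₁ =>
    have hcoeff : Measurable fun ω => (a ω (n + 1) : ℤ) := measurable_from_top.comp (ha (n + 1))
    exact ⟨(hcoeff.mul h₁.1).add h₀.1, (hcoeff.mul h₁.2).add h₀.2⟩

lemma measurable_cfVal (ha : ∀ i, Measurable fun ω => a ω i) :
    Measurable fun ω => cfVal (a ω) := by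
  have hconv : ∀ n, Measurable fun ω => cfConv (a ω) n := fun n =>
    (measurable_from_top.comp (measurable_cfP_cfQ ha (n + 1)).1).div
      (measurable_from_top.comp (measurable_cfP_cfQ ha (n + 1)).2)
  exact (StronglyMeasurable.limUnder fun n => (hconv n).stronglyMeasurable).measurable

end Measurability

section PointwiseErgodic

variable {α : Type*} {T : α → α} {g : α → ℝ}

lemma bddAbove_range_birkhoffSum_apply_iff (x : α) :
    BddAbove (Set.range fun n => birkhoffSum T g n (T x)) ↔
      BddAbove (Set.range fun n => birkhoffSum T g n x) := by
  simp only [bddAbove_def, Set.forall_mem_range]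
  constructor
  · rintro ⟨C, hC⟩
    refine ⟨max 0 (g x + C), fun n => ?_⟩
    cases n with
    | zero => simp
    | succ n =>
      exact (birkhoffSum_succ' T g n x ▸ add_le_add_right (hC n) _).trans (le_max_right _ _)
  · rintro ⟨C, hC⟩
    exact ⟨C - g x, fun n => by linarith [hC (n + 1), birkhoffSum_succ' T g n x]⟩

noncomputable def birkhoffMax (T : α → α) (g : α → ℝ) (N : ℕ) : α → ℝ :=
  (Finset.range (N + 1)).sup' Finset.nonempty_range_add_one fun k => birkhoffSum T g k

lemma birkhoffMax_apply (N : ℕ) (x : α) :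
    birkhoffMax T g N x =
      (Finset.range (N + 1)).sup' Finset.nonempty_range_add_one fun k => birkhoffSum T g k x :=
  Finset.sup'_apply _ _ x

lemma birkhoffSum_le_birkhoffMax {k N : ℕ} (hk : k ≤ N) (x : α) :
    birkhoffSum T g k x ≤ birkhoffMax T g N x := by
  rw [birkhoffMax_apply]
  exact Finset.le_sup' (fun k => birkhoffSum T g k x) (Finset.mem_range_succ_iff.2 hk)

lemma birkhoffMax_nonneg (N : ℕ) (x : α) : 0 ≤ birkhoffMax T g N x :=
  (birkhoffSum_zero T g x).symm.le.trans (birkhoffSum_le_birkhoffMax N.zero_le x)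

lemma exists_birkhoffMax_eq (N : ℕ) (x : α) :
    ∃ k ≤ N, birkhoffMax T g N x = birkhoffSum T g k x := by
  obtain ⟨k, hk, hmax⟩ := Finset.exists_mem_eq_sup' Finset.nonempty_range_add_one
    fun k => birkhoffSum T g k x
  exact ⟨k, Finset.mem_range_succ_iff.1 hk, (birkhoffMax_apply N x).trans hmax⟩

lemma birkhoffMax_sub_birkhoffMax_apply_le {N : ℕ} {x : α} (hx : 0 < birkhoffMax T g N x) :
    birkhoffMax T g N x - birkhoffMax T g N (T x) ≤ g x := by
  obtain ⟨_ | k, hk, hmax⟩ := exists_birkhoffMax_eq (T := T) (g := g) N x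
  · simp [hmax] at hx
  · rw [hmax, birkhoffSum_succ']
    linarith [birkhoffSum_le_birkhoffMax (T := T) (g := g) (by omega : k ≤ N) (T x)]

variable [MeasurableSpace α] {μ : Measure α}

lemma measurable_birkhoffSum (hT : Measurable T) (hg : Measurable g) (n : ℕ) :
    Measurable (birkhoffSum T g n) :=
  Finset.measurable_sum _ fun i _ => hg.comp (hT.iterate i)

lemma integrable_birkhoffSum (hT : MeasurePreserving T μ μ) (hg : Integrable g μ) (n : ℕ) :
    Integrable (birkhoffSum T g n) μ :=
  integrable_finsetSum _ fun i _ => (hT.iterate i).integrable_comp_of_integrable hg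

lemma measurable_birkhoffMax (hT : Measurable T) (hg : Measurable g) (N : ℕ) :
    Measurable (birkhoffMax T g N) :=
  Finset.measurable_sup' _ fun k _ => measurable_birkhoffSum hT hg k

lemma integrable_birkhoffMax (hT : MeasurePreserving T μ μ) (hg : Integrable g μ) (N : ℕ) :
    Integrable (birkhoffMax T g N) μ :=
  Finset.sup'_induction (p := fun f => Integrable f μ) _ _ (fun _ h₁ _ h₂ => h₁.sup h₂)
    fun k _ => integrable_birkhoffSum hT hg k

/-- Garsia's maximal inequality. -/
lemma setIntegral_birkhoffMax_pos_nonneg (hT : MeasurePreserving T μ μ) (hg : Measurable g)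
    (hgi : Integrable g μ) (N : ℕ) :
    0 ≤ ∫ x in {x | 0 < birkhoffMax T g N x}, g x ∂μ := by
  set M := birkhoffMax T g N
  set E := {x | 0 < M x}
  have hM : Measurable M := measurable_birkhoffMax hT.measurable hg N
  have hMi : Integrable M μ := integrable_birkhoffMax hT hgi N
  have hMTi : Integrable (M ∘ T) μ := hT.integrable_comp_of_integrable hMi
  have hE : MeasurableSet E := measurableSet_lt measurable_const hM
  have hME : ∫ x in E, M x ∂μ = ∫ x, M x ∂μ :=
    setIntegral_eq_integral_of_forall_compl_eq_zero fun x hx =>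
      le_antisymm (not_lt.1 hx) (birkhoffMax_nonneg N x)
  have hMT : ∫ x, M (T x) ∂μ = ∫ x, M x ∂μ := by
    rw [← integral_map hT.measurable.aemeasurable hM.aestronglyMeasurable, hT.map_eq]
  calc 0 = ∫ x, M x ∂μ - ∫ x, M (T x) ∂μ := by rw [hMT, sub_self]
    _ ≤ ∫ x in E, M x ∂μ - ∫ x in E, M (T x) ∂μ := by
      rw [hME]
      exact sub_le_sub_left (setIntegral_le_integral hMTi
        (Eventually.of_forall fun x => birkhoffMax_nonneg N (T x))) _
    _ = ∫ x in E, (M x - M (T x)) ∂μ := (integral_sub hMi.integrableOn hMTi.integrableOn).symm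
    _ ≤ ∫ x in E, g x ∂μ :=
      setIntegral_mono_on (hMi.sub hMTi).integrableOn hgi.integrableOn hE
        fun x hx => birkhoffMax_sub_birkhoffMax_apply_le hx

theorem setIntegral_exists_birkhoffSum_pos_nonneg (hT : MeasurePreserving T μ μ)
    (hg : Measurable g) (hgi : Integrable g μ) :
    0 ≤ ∫ x in {x | ∃ n, 0 < birkhoffSum T g n x}, g x ∂μ := by
  have hunion : {x | ∃ n, 0 < birkhoffSum T g n x} = ⋃ N, {x | 0 < birkhoffMax T g N x} := by
    ext x
    simp only [Set.mem_iUnion]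
    refine ⟨fun ⟨n, hn⟩ => ⟨n, hn.trans_le (birkhoffSum_le_birkhoffMax le_rfl x)⟩,
      fun ⟨N, hN⟩ => ?_⟩
    obtain ⟨k, -, hk⟩ := exists_birkhoffMax_eq (T := T) (g := g) N x
    exact ⟨k, hk ▸ hN⟩
  have hmono : Monotone fun N => {x | 0 < birkhoffMax T g N x} := fun N N' hN x hx =>
    (exists_birkhoffMax_eq (T := T) (g := g) N x).elim fun k ⟨hk, hmax⟩ =>
      hx.trans_le (hmax ▸ birkhoffSum_le_birkhoffMax (hk.trans hN) x)
  rw [hunion]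
  exact ge_of_tendsto' (tendsto_setIntegral_of_monotone
      (fun N => measurableSet_lt measurable_const (measurable_birkhoffMax hT.measurable hg N))
      hmono hgi.integrableOn)
    (setIntegral_birkhoffMax_pos_nonneg hT hg hgi)

lemma ae_bddAbove_birkhoffSum (herg : Ergodic T μ) (hg : Measurable g) (hgi : Integrable g μ)
    (hneg : ∫ x, g x ∂μ < 0) :
    ∀ᵐ x ∂μ, BddAbove (Set.range fun n => birkhoffSum T g n x) := by
  have hB := measurableSet_bddAbove_range (measurable_birkhoffSum herg.measurable hg)
  have hinv : T ⁻¹' {x | BddAbove (Set.range fun n => birkhoffSum T g n x)} =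
      {x | BddAbove (Set.range fun n => birkhoffSum T g n x)} :=
    Set.ext bddAbove_range_birkhoffSum_apply_iff
  refine (herg.toPreErgodic.ae_mem_or_ae_notMem hB hinv).resolve_right fun hunb => ?_
  have hpos : ∀ᵐ x ∂μ, x ∈ {x | ∃ n, 0 < birkhoffSum T g n x} := hunb.mono fun x hx => by
    obtain ⟨_, ⟨n, rfl⟩, hn⟩ := not_bddAbove_iff.1 hx 0
    exact ⟨n, hn⟩
  have := setIntegral_exists_birkhoffSum_pos_nonneg herg.toMeasurePreserving hg hgi
  rw [Measure.restrict_eq_self_of_ae_mem hpos] at this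
  exact this.not_gt hneg

variable [IsProbabilityMeasure μ]

lemma ae_eventually_birkhoffAverage_lt (herg : Ergodic T μ) (hg : Measurable g)
    (hgi : Integrable g μ) {c : ℝ} (hc : ∫ x, g x ∂μ < c) :
    ∀ᵐ x ∂μ, ∀ᶠ n in atTop, birkhoffAverage ℝ T g n x < c := by
  set c' := (∫ x, g x ∂μ + c) / 2
  have hneg : ∫ x, (g x - c') ∂μ < 0 := by
    rw [integral_sub hgi (integrable_const c')]
    simp only [integral_const, probReal_univ, smul_eq_mul, one_mul, c']
    linarith
  filter_upwards [ae_bddAbove_birkhoffSum herg (hg.sub measurable_const)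
    (hgi.sub (integrable_const c')) hneg] with x ⟨C, hC⟩
  have hlim : Tendsto (fun n : ℕ => c' + C / n) atTop (𝓝 (c' + 0)) :=
    tendsto_const_nhds.add (tendsto_const_div_atTop_nhds_zero_nat C)
  have hc' : c' + 0 < c := by simp only [c']; linarith
  filter_upwards [hlim.eventually_lt_const hc', eventually_gt_atTop 0] with n hn hn0
  have hsum : birkhoffSum T g n x - n * c' ≤ C := by
    have := hC ⟨n, rfl⟩
    simpa [birkhoffSum_sub, birkhoffSum, mul_comm] using this
  have hn' : (0 : ℝ) < n := by exact_mod_cast hn0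
  calc birkhoffAverage ℝ T g n x = (n : ℝ)⁻¹ * birkhoffSum T g n x := rfl
    _ ≤ c' + C / n := by
      rw [inv_mul_le_iff₀ hn', mul_add, mul_div_cancel₀ _ hn'.ne']
      linarith
    _ < c := hn

theorem ae_tendsto_birkhoffAverage_integral (herg : Ergodic T μ) (hg : Measurable g)
    (hgi : Integrable g μ) :
    ∀ᵐ x ∂μ, Tendsto (fun n => birkhoffAverage ℝ T g n x) atTop
      (𝓝 (∫ y, g y ∂μ)) := by
  have hup : ∀ᵐ x ∂μ, ∀ q : {q : ℚ // ∫ y, g y ∂μ < q},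
      ∀ᶠ n in atTop, birkhoffAverage ℝ T g n x < q :=
    ae_all_iff.2 fun q => ae_eventually_birkhoffAverage_lt herg hg hgi q.2
  have hlow : ∀ᵐ x ∂μ, ∀ q : {q : ℚ // q < ∫ y, g y ∂μ},
      ∀ᶠ n in atTop, (q : ℝ) < birkhoffAverage ℝ T g n x := by
    refine ae_all_iff.2 fun q => ?_
    have hq : ∫ y, (-g) y ∂μ < -q := by simpa [integral_neg] using q.2
    filter_upwards [ae_eventually_birkhoffAverage_lt herg hg.neg hgi.neg hq] with x hx
    filter_upwards [hx] with n hn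
    simpa [birkhoffAverage_neg] using hn
  filter_upwards [hup, hlow] with x hx_up hx_low
  refine tendsto_order.2 ⟨fun a ha => ?_, fun b hb => ?_⟩
  · obtain ⟨q, haq, hq⟩ := exists_rat_btwn ha
    exact (hx_low ⟨q, hq⟩).mono fun n hn => haq.trans hn
  · obtain ⟨q, hq, hqb⟩ := exists_rat_btwn hb
    exact (hx_up ⟨q, hq⟩).mono fun n hn => hn.trans hqb

end PointwiseErgodic

lemma tendsto_one_div_mul_of_abs_add_le {u v : ℕ → ℝ} {C L : ℝ}
    (huv : ∀ n, |u n + v n| ≤ C) (hv : Tendsto (fun n : ℕ => (n : ℝ)⁻¹ • v n) atTop (𝓝 L)) :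
    Tendsto (fun n : ℕ => 1 / (n : ℝ) * u n) atTop (𝓝 (-L)) := by
  have hsum : Tendsto (fun n : ℕ => (n : ℝ)⁻¹ * (u n + v n)) atTop (𝓝 0) := by
    refine squeeze_zero_norm (fun n => ?_) (tendsto_const_div_atTop_nhds_zero_nat C)
    rw [norm_mul, norm_inv, Real.norm_natCast, Real.norm_eq_abs, inv_mul_eq_div]
    exact div_le_div_of_nonneg_right (huv n) n.cast_nonneg
  simpa [mul_add, ← sub_eq_add_neg] using hsum.sub hv

lemma shiftS_iterate_apply (ω : ℕ → ℕ+) (k m : ℕ) : shiftS^[k] ω m = ω (m + k) := by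
  induction k generalizing ω with
  | zero => rfl
  | succ k ih => rw [Function.iterate_succ_apply, ih]; rfl

lemma Xtail_one_iterate_shiftS (ω : ℕ → ℕ+) (k : ℕ) :
    Xtail (shiftS^[k] ω) 1 = cfVal fun i => (ω (i + k - 1) : ℕ) :=
  cfVal_congr fun i hi => by rw [shiftS_iterate_apply]; congr 3; omega

lemma Xtail_one (ω : ℕ → ℕ+) : Xtail ω 1 = cfVal fun i => (ω (i - 1) : ℕ) := by
  simpa using Xtail_one_iterate_shiftS ω 0

lemma measurable_log_Xtail_one : Measurable fun ω : ℕ → ℕ+ => log (Xtail ω 1) := by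
  simp_rw [Xtail_one]
  exact measurable_log.comp
    (measurable_cfVal fun i => measurable_from_top.comp (measurable_pi_apply (i - 1)))

lemma integrable_log_Xtail_one {P : Measure (ℕ → ℕ+)} [IsFiniteMeasure P]
    (hint : Integrable (fun ω : ℕ → ℕ+ => log ((ω 0 : ℕ) : ℝ)) P) :
    Integrable (fun ω : ℕ → ℕ+ => log (Xtail ω 1)) P := by
  refine ((integrable_const (log 2)).add hint).mono' measurable_log_Xtail_one.aestronglyMeasurable
    (ae_of_all _ fun ω => ?_)
  rw [Xtail_one, Real.norm_eq_abs]
  exact abs_log_cfVal_le fun i => (ω (i + 1 - 1)).pos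

theorem random_levy_constant_general (P : Measure (ℕ → ℕ+)) [IsProbabilityMeasure P]
    (herg : Ergodic shiftS P)
    (hint : Integrable (fun ω : ℕ → ℕ+ => Real.log ((ω 0 : ℕ) : ℝ)) P) :
    ∀ᵐ ω ∂P,
      Tendsto (fun n : ℕ => (1 / (n : ℝ)) * Real.log ((Qent ω n : ℝ))) atTop
        (𝓝 (-∫ ω', Real.log (Xtail ω' 1) ∂P)) := by
  filter_upwards [ae_tendsto_birkhoffAverage_integral herg measurable_log_Xtail_one
    (integrable_log_Xtail_one hint)] with ω hω
  refine tendsto_one_div_mul_of_abs_add_le (C := log 2) (fun n => ?_) hω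
  simp only [birkhoffSum, Xtail_one_iterate_shiftS]
  exact abs_log_cfQ_add_sum_log_cfVal_le (fun i => (ω (i + 1 - 1)).pos) n

/-- **Lévy-type theorem for random continued fractions.** If the left shift is
measure-preserving and ergodic for `P` and `E(log A_1) < ∞`, then for `P`-almost
every `ω`, `lim_{n→∞} (1/n) log Q_n(ω) = −∫ log X dP`. -/
theorem random_levy_constant (P : Measure (ℕ → ℕ+)) [IsProbabilityMeasure P]
    (hmp : MeasurePreserving shiftS P P) (herg : Ergodic shiftS P)
    (hint : Integrable (fun ω : ℕ → ℕ+ => Real.log ((ω 0 : ℕ) : ℝ)) P) :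
    ∀ᵐ ω ∂P,
      Tendsto (fun n : ℕ => (1 / (n : ℝ)) * Real.log ((Qent ω n : ℝ))) atTop
        (𝓝 (-∫ ω', Real.log (Xtail ω' 1) ∂P)) :=
  random_levy_constant_general P herg hint
end

section
/- The function x ↦ log a_1(x) is integrable with respect to the Gauss measure μ, and ∫_{[0,1)} log a_1(x) dμ(x) = (1/log 2)·Σ_{k=1}^∞ log k · log(1 + 1/(k(k+2))) < ∞. -/
open Filter MeasureTheory Real Topology

/-- The first partial quotient `a_1(x) = ⌊1/x⌋` (as a natural number). -/
noncomputable def pq1 (x : ℝ) : ℕ := (⌊x⁻¹⌋).toNat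

/-- The Gauss measure `μ(A) = (1/log 2) ∫_A dx/(1+x)` on `[0,1)`. -/
noncomputable def gaussMeasure : Measure ℝ :=
  (ENNReal.ofReal (Real.log 2))⁻¹ •
    ((volume.restrict (Set.Ico (0 : ℝ) 1)).withDensity
      (fun x => ENNReal.ofReal (1 / (1 + x))))

/-!
On `(0, 1]` the level set `{a_1 = k}` is the interval `(1/(k+1), 1/k]`, whose Gauss mass is
`log ((1 + 1/k) / (1 + 1/(k+1))) / log 2 = log (1 + 1/(k(k+2))) / log 2`. Since `log a_1 ≥ 0`,
its integral is the sum over `k` of `log k` times these masses, computed as a lower Lebesgue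
integral; the series converges because `log k ≤ 2 √k` and `log (1 + 1/(k(k+2))) ≤ 1/k²`.
-/

open Set

noncomputable def gaussLogTerm (k : ℕ) : ℝ := log k * log (1 + 1 / (k * (k + 2)))

lemma gaussLogTerm_nonneg (k : ℕ) : 0 ≤ gaussLogTerm k :=
  mul_nonneg (log_natCast_nonneg k) (log_nonneg (le_add_of_nonneg_right (by positivity)))

lemma gaussLogTerm_le (k : ℕ) : gaussLogTerm k ≤ 2 * (k : ℝ) ^ (-(3 / 2) : ℝ) := by
  rcases k.eq_zero_or_pos with rfl | hk
  · simp [gaussLogTerm]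
  have hk : (0 : ℝ) < k := by exact_mod_cast hk
  have hlog : log k ≤ 2 * (k : ℝ) ^ (1 / 2 : ℝ) := by
    linarith [log_le_rpow_div hk.le (one_half_pos (α := ℝ))]
  have hmass : log (1 + 1 / (k * (k + 2))) ≤ (k : ℝ) ^ (-2 : ℝ) := calc
    log (1 + 1 / (k * (k + 2))) ≤ 1 / (k * (k + 2)) := by
      linarith [log_le_sub_one_of_pos (by positivity : (0 : ℝ) < 1 + 1 / (k * (k + 2)))]
    _ ≤ 1 / (k * k) := one_div_le_one_div_of_le (by positivity) (by nlinarith)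
    _ = (k : ℝ) ^ (-2 : ℝ) := by rw [rpow_neg hk.le, rpow_two, sq, one_div]
  calc gaussLogTerm k ≤ 2 * (k : ℝ) ^ (1 / 2 : ℝ) * (k : ℝ) ^ (-2 : ℝ) :=
        mul_le_mul hlog hmass (log_nonneg (le_add_of_nonneg_right (by positivity)))
          (by positivity)
    _ = 2 * (k : ℝ) ^ (-(3 / 2) : ℝ) := by rw [mul_assoc, ← rpow_add hk]; norm_num

lemma summable_gaussLogTerm : Summable gaussLogTerm :=
  .of_nonneg_of_le gaussLogTerm_nonneg gaussLogTerm_le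
    ((summable_nat_rpow.mpr (by norm_num)).mul_left 2)

lemma summable_gaussLogTerm_pnat : Summable fun k : ℕ+ => gaussLogTerm k :=
  summable_gaussLogTerm.comp_injective (i := PNat.val) PNat.coe_injective

lemma pq1_eq_natFloor (x : ℝ) : pq1 x = ⌊x⁻¹⌋₊ := Int.floor_toNat _

lemma measurable_pq1 : Measurable pq1 := by
  simpa only [funext pq1_eq_natFloor] using measurable_inv.nat_floor

lemma measurable_log_pq1 : Measurable fun x => log (pq1 x) :=
  (measurable_from_nat (f := fun n : ℕ => log n)).comp measurable_pq1

lemma pq1_ne_zero_iff {x : ℝ} : pq1 x ≠ 0 ↔ x ∈ Ioc 0 1 := by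
  rw [pq1_eq_natFloor, ← Nat.pos_iff_ne_zero, Nat.floor_pos, one_le_inv_iff₀, mem_Ioc]

lemma pq1_preimage_singleton {k : ℕ} (hk : 0 < k) :
    pq1 ⁻¹' {k} = Ioc ((k + 1 : ℝ)⁻¹) (k : ℝ)⁻¹ := by
  ext x
  have hk' : (0 : ℝ) < k := by exact_mod_cast hk
  simp only [mem_preimage, mem_singleton_iff, mem_Ioc, pq1_eq_natFloor]
  constructor
  · intro hx
    have hx0 : 0 < x := (pq1_ne_zero_iff.mp (by rw [pq1_eq_natFloor, hx]; omega)).1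
    have := (Nat.floor_eq_iff (inv_nonneg.mpr hx0.le)).mp hx
    exact ⟨(inv_lt_comm₀ (by positivity) hx0).mpr this.2, (le_inv_comm₀ hx0 hk').mpr this.1⟩
  · rintro ⟨hlo, hhi⟩
    have hx0 : 0 < x := (inv_pos.mpr (by positivity)).trans hlo
    exact (Nat.floor_eq_iff (inv_nonneg.mpr hx0.le)).mpr
      ⟨(le_inv_comm₀ hx0 hk').mp hhi, (inv_lt_comm₀ (by positivity) hx0).mp hlo⟩

lemma Ioc_zero_one_eq_iUnion_pq1_preimage :
    Ioc (0 : ℝ) 1 = ⋃ k : ℕ+, pq1 ⁻¹' {(k : ℕ)} := by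
  ext x
  simp only [mem_iUnion, mem_preimage, mem_singleton_iff, ← pq1_ne_zero_iff]
  exact ⟨fun h => ⟨⟨pq1 x, Nat.pos_of_ne_zero h⟩, rfl⟩, fun ⟨k, hk⟩ => hk ▸ k.ne_zero⟩

lemma setLIntegral_Ioc_one_div_one_add {a b : ℝ} (ha : -1 < a) (hab : a ≤ b) :
    ∫⁻ x in Ioc a b, ENNReal.ofReal (1 / (1 + x)) = ENNReal.ofReal (log ((1 + b) / (1 + a))) := by
  have hpos : ∀ x ∈ Icc a b, 0 < 1 + x := fun x hx => by linarith [hx.1]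
  have hcont : ContinuousOn (fun x : ℝ => 1 / (1 + x)) (Icc a b) :=
    continuousOn_const.div (by fun_prop) fun x hx => (hpos x hx).ne'
  rw [← ofReal_integral_eq_lintegral_ofReal
      (hcont.integrableOn_Icc.mono_set Ioc_subset_Icc_self)
      ((ae_restrict_mem measurableSet_Ioc).mono fun x hx =>
        (one_div_pos.mpr (hpos x (Ioc_subset_Icc_self hx))).le),
    ← intervalIntegral.integral_of_le hab, intervalIntegral.integral_comp_add_left
      (fun x => 1 / x), integral_one_div_of_pos (by linarith) (by linarith)]

lemma lintegral_gaussMeasure {f : ℝ → ENNReal} (hf : Measurable f) :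
    ∫⁻ x, f x ∂gaussMeasure =
      (ENNReal.ofReal (log 2))⁻¹ * ∫⁻ x in Ioc 0 1, ENNReal.ofReal (1 / (1 + x)) * f x := by
  rw [gaussMeasure, lintegral_smul_measure, lintegral_withDensity_eq_lintegral_mul _
    (by fun_prop) hf, Measure.restrict_congr_set Ico_ae_eq_Ioc]
  rfl

lemma one_add_inv_div_one_add_inv_succ {k : ℝ} (hk : 0 < k) :
    (1 + k⁻¹) / (1 + (k + 1)⁻¹) = 1 + 1 / (k * (k + 2)) := by
  field_simp
  ring

lemma lintegral_Ioc_log_pq1 :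
    ∫⁻ x in Ioc 0 1, ENNReal.ofReal (1 / (1 + x)) * ENNReal.ofReal (log (pq1 x)) =
      ENNReal.ofReal (∑' k : ℕ+, gaussLogTerm k) := by
  have hfiber (k : ℕ+) : MeasurableSet (pq1 ⁻¹' {(k : ℕ)}) :=
    measurable_pq1 (measurableSet_singleton _)
  rw [Ioc_zero_one_eq_iUnion_pq1_preimage, lintegral_iUnion hfiber
      ((pairwise_disjoint_fiber pq1).comp_of_injective PNat.coe_injective),
    ENNReal.ofReal_tsum_of_nonneg (f := fun k : ℕ+ => gaussLogTerm k)
      (fun k => gaussLogTerm_nonneg k) summable_gaussLogTerm_pnat]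
  refine tsum_congr fun k => ?_
  have hk : (0 : ℝ) < k := by exact_mod_cast k.pos
  rw [setLIntegral_congr_fun (hfiber k) fun x (hx : pq1 x = k) => by rw [hx],
    lintegral_mul_const _ (by fun_prop), pq1_preimage_singleton k.pos,
    setLIntegral_Ioc_one_div_one_add (neg_one_lt_zero.trans (by positivity))
      (inv_anti₀ hk (by linarith)),
    one_add_inv_div_one_add_inv_succ hk, mul_comm, ← ENNReal.ofReal_mul (log_natCast_nonneg _)]
  rfl

/-- The function `x ↦ log a_1(x)` is integrable with respect to the Gauss
measure `μ`, and
`∫ log a_1 dμ = (1/log 2) ∑_{k=1}^∞ log k · log(1 + 1/(k(k+2))) < ∞`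
(finiteness being the summability of the series). -/
theorem log_partial_quotient_integrable :
    Integrable (fun x : ℝ => Real.log ((pq1 x : ℝ))) gaussMeasure ∧
    Summable (fun k : ℕ+ =>
      Real.log ((k : ℕ) : ℝ) *
        Real.log (1 + 1 / (((k : ℕ) : ℝ) * (((k : ℕ) : ℝ) + 2)))) ∧
    ∫ x, Real.log ((pq1 x : ℝ)) ∂gaussMeasure =
      (1 / Real.log 2) * ∑' k : ℕ+,
        Real.log ((k : ℕ) : ℝ) *
          Real.log (1 + 1 / (((k : ℕ) : ℝ) * (((k : ℕ) : ℝ) + 2))) := by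
  have hmeas := measurable_log_pq1
  have hnonneg : 0 ≤ᵐ[gaussMeasure] fun x : ℝ => log (pq1 x) :=
    ae_of_all _ fun x => log_natCast_nonneg _
  have hlintegral : ∫⁻ x, ENNReal.ofReal (log (pq1 x)) ∂gaussMeasure =
      (ENNReal.ofReal (log 2))⁻¹ * ENNReal.ofReal (∑' k : ℕ+, gaussLogTerm k) := by
    rw [lintegral_gaussMeasure hmeas.ennreal_ofReal, lintegral_Ioc_log_pq1]
  refine ⟨⟨hmeas.aestronglyMeasurable, ?_⟩, summable_gaussLogTerm_pnat, ?_⟩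
  · rw [hasFiniteIntegral_iff_ofReal hnonneg, hlintegral]
    exact ENNReal.mul_lt_top
      (ENNReal.inv_lt_top.mpr (ENNReal.ofReal_pos.mpr (log_pos one_lt_two))) ENNReal.ofReal_lt_top
  · rw [integral_eq_lintegral_of_nonneg_ae hnonneg hmeas.aestronglyMeasurable, hlintegral,
      ENNReal.toReal_mul, ENNReal.toReal_inv, ENNReal.toReal_ofReal (log_nonneg one_le_two),
      ENNReal.toReal_ofReal (tsum_nonneg fun k : ℕ+ => gaussLogTerm_nonneg k), one_div]
    rfl
end
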